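/- arXiv:2103.03828 — 2 statements merged into one kernel-verified Lean document; each statement's English description precedes it below -/
import Mathlib

section
/- The discrete Ricci curvature of the Hasse diagram of the strong Bruhat order of the dihedral Coxeter group I_2(4) equals 1/2, i.e. Ric(H(I_2(4))) = 1/2. -/
/-- Graph Laplacian: `Δ(f)(x) = Σ_{v ∈ B(1,x)} (f(v) − f(x))`. -/
noncomputable def graphLap {V : Type*} (G : SimpleGraph V) (f : V → ℝ) (x : V) : ℝ :=
  ∑ᶠ v ∈ G.neighborSet x, (f v - f x)

/-- `Γ(f,g)(x) = (1/2) Σ_{v ∈ B(1,x)} (f(x) − f(v))(g(x) − g(v))`. -/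
noncomputable def graphGamma {V : Type*} (G : SimpleGraph V) (f g : V → ℝ) (x : V) : ℝ :=
  (1 / 2) * ∑ᶠ v ∈ G.neighborSet x, (f x - f v) * (g x - g v)

/-- `Γ₂(f)(x) = (1/2) Δ(Γ(f,f))(x) − Γ(f, Δ(f))(x)`. -/
noncomputable def graphGamma2 {V : Type*} (G : SimpleGraph V) (f : V → ℝ) (x : V) : ℝ :=
  (1 / 2) * graphLap G (fun y => graphGamma G f f y) x - graphGamma G f (graphLap G f) x

/-- The discrete Ricci curvature of a graph: the largest `K ∈ ℝ ∪ {−∞}` such that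
`Γ₂(f)(x) ≥ K·Γ(f)(x)` for all `f` and all vertices `x`. -/
noncomputable def graphRic {V : Type*} (G : SimpleGraph V) : EReal :=
  sSup (Real.toEReal '' {K : ℝ | ∀ (f : V → ℝ) (x : V),
    K * graphGamma G f f x ≤ graphGamma2 G f x})

/-- The local discrete Ricci curvature of a graph at a vertex `x`. -/
noncomputable def graphRicAt {V : Type*} (G : SimpleGraph V) (x : V) : EReal :=
  sSup (Real.toEReal '' {K : ℝ | ∀ f : V → ℝ,
    K * graphGamma G f f x ≤ graphGamma2 G f x})

/-- The Bruhat order on a Coxeter group: `u ≤ v` iff there is a chain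
`u = w_0 → w_1 → ⋯ → w_k = v` where each step multiplies on the left by a
reflection and strictly increases the length. -/
def CoxeterSystem.bruhatLE {B : Type*} {W : Type*} [Group W] {M : CoxeterMatrix B}
    (cs : CoxeterSystem M W) : W → W → Prop :=
  Relation.ReflTransGen (fun u v =>
    (∃ t, cs.IsReflection t ∧ v = t * u) ∧ cs.length u < cs.length v)

/-- The strict Bruhat order. -/
def CoxeterSystem.bruhatLT {B : Type*} {W : Type*} [Group W] {M : CoxeterMatrix B}
    (cs : CoxeterSystem M W) (u v : W) : Prop :=
  cs.bruhatLE u v ∧ u ≠ v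

/-- `v` covers `u` in the Bruhat order. -/
def CoxeterSystem.bruhatCovBy {B : Type*} {W : Type*} [Group W] {M : CoxeterMatrix B}
    (cs : CoxeterSystem M W) (u v : W) : Prop :=
  cs.bruhatLT u v ∧ ¬∃ θ, cs.bruhatLT u θ ∧ cs.bruhatLT θ v

/-- The Hasse diagram of the (strong) Bruhat order of a Coxeter group, as a simple
graph: `u` and `v` are adjacent iff one covers the other. -/
def CoxeterSystem.bruhatHasse {B : Type*} {W : Type*} [Group W] {M : CoxeterMatrix B}
    (cs : CoxeterSystem M W) : SimpleGraph W :=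
  SimpleGraph.fromRel cs.bruhatCovBy

/-!
The Coxeter group `I₂(4)` is the dihedral group of order 8 (`s ↦ sr 0`, `t ↦ sr 1`). All its
elements of odd length are reflections, so `u < v` in the Bruhat order exactly when
`ℓ u < ℓ v`: the Hasse diagram has levels of sizes 1, 2, 2, 2, 1, consecutive levels being
completely joined. Right multiplication by the longest element and the transposition of the
twins `s`, `t` are automorphisms of this graph, so the bound `Γ₂ ≥ Γ / 2` only has to be
checked at `e`, `s` and `st`, where `Γ₂ - Γ / 2` is an explicit sum of squares. The length
function has `Γ = 2` and `Γ₂ = 1` at `st`, so `1 / 2` is optimal.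
-/

section Curvature

variable {V V' : Type*} {G : SimpleGraph V} {G' : SimpleGraph V'}

def BakryEmeryAt (G : SimpleGraph V) (K : ℝ) (x : V) : Prop :=
  ∀ f : V → ℝ, K * graphGamma G f f x ≤ graphGamma2 G f x

theorem graphLap_eq_sum (f : V → ℝ) (x : V) [Fintype (G.neighborSet x)] :
    graphLap G f x = ∑ v ∈ G.neighborFinset x, (f v - f x) := by
  rw [graphLap, ← G.coe_neighborFinset, finsum_mem_coe_finset]

theorem graphGamma_eq_sum (f g : V → ℝ) (x : V) [Fintype (G.neighborSet x)] :
    graphGamma G f g x = 1 / 2 * ∑ v ∈ G.neighborFinset x, (f x - f v) * (g x - g v) := by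
  rw [graphGamma, ← G.coe_neighborFinset, finsum_mem_coe_finset]

theorem finsum_neighborSet_iso (e : G ≃g G') (g : V' → ℝ) (x : V) :
    ∑ᶠ v ∈ G'.neighborSet (e x), g v = ∑ᶠ v ∈ G.neighborSet x, g (e v) := by
  have : G'.neighborSet (e x) = e '' G.neighborSet x := by
    ext v
    obtain ⟨v, rfl⟩ := e.surjective v
    simp [e.injective.mem_set_image, e.map_adj_iff]
  rw [this, finsum_mem_image e.injective.injOn]

theorem graphLap_iso (e : G ≃g G') (f : V' → ℝ) (x : V) :
    graphLap G' f (e x) = graphLap G (f ∘ e) x :=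
  finsum_neighborSet_iso e (fun v => f v - f (e x)) x

theorem graphGamma_iso (e : G ≃g G') (f g : V' → ℝ) (x : V) :
    graphGamma G' f g (e x) = graphGamma G (f ∘ e) (g ∘ e) x := by
  rw [graphGamma, graphGamma,
    finsum_neighborSet_iso e fun v => (f (e x) - f v) * (g (e x) - g v)]
  rfl

theorem graphGamma2_iso (e : G ≃g G') (f : V' → ℝ) (x : V) :
    graphGamma2 G' f (e x) = graphGamma2 G (f ∘ e) x := by
  have hΓ : (fun y => graphGamma G' f f y) ∘ e = fun y => graphGamma G (f ∘ e) (f ∘ e) y :=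
    funext (graphGamma_iso e f f)
  have hΔ : graphLap G' f ∘ e = graphLap G (f ∘ e) := funext (graphLap_iso e f)
  rw [graphGamma2, graphGamma2, graphLap_iso, graphGamma_iso, hΓ, hΔ]

theorem bakryEmeryAt_iso_iff (e : G ≃g G') {K : ℝ} {x : V} :
    BakryEmeryAt G' K (e x) ↔ BakryEmeryAt G K x := by
  refine ⟨fun h f => ?_, fun h f => ?_⟩
  · simpa [graphGamma_iso, graphGamma2_iso, Function.comp_def] using h (f ∘ e.symm)
  · rw [graphGamma_iso, graphGamma2_iso]
    exact h (f ∘ e)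

theorem graphRic_eq_sSup (G : SimpleGraph V) :
    graphRic G = sSup (Real.toEReal '' {K : ℝ | ∀ x, BakryEmeryAt G K x}) := by
  simp only [graphRic, BakryEmeryAt]
  exact congrArg _ (congrArg _ (Set.ext fun K => forall_comm))

theorem graphRic_iso (e : G ≃g G') : graphRic G = graphRic G' := by
  simp only [graphRic_eq_sSup]
  congr! 2
  ext K
  exact ⟨fun h x => e.apply_symm_apply x ▸ (bakryEmeryAt_iso_iff e).2 (h _),
    fun h x => (bakryEmeryAt_iso_iff e).1 (h _)⟩

theorem graphRic_eq_of_forall_bakryEmeryAt_of_eq {K : ℝ} (hK : ∀ x, BakryEmeryAt G K x)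
    (f : V → ℝ) (x : V)
    (hpos : 0 < graphGamma G f f x) (heq : graphGamma2 G f x = K * graphGamma G f f x) :
    graphRic G = K := by
  rw [graphRic_eq_sSup]
  refine IsGreatest.csSup_eq ⟨⟨K, hK, rfl⟩, ?_⟩
  rintro _ ⟨K', hK', rfl⟩
  have := hK' x f
  exact EReal.coe_le_coe_iff.2 (le_of_mul_le_mul_right (heq ▸ this) hpos)

end Curvature

namespace CoxeterSystem

variable {B W : Type*} [Group W] {M : CoxeterMatrix B} (cs : CoxeterSystem M W)

theorem isReflection_wordProd_append_reverse (ω : List B) (i : B) :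
    cs.IsReflection (cs.wordProd (ω ++ i :: ω.reverse)) := by
  rw [wordProd_append, wordProd_cons, wordProd_reverse, ← mul_assoc]
  exact ⟨_, _, rfl⟩

theorem exists_length_eq {w : W} {n : ℕ} (hn : n ≤ cs.length w) : ∃ θ, cs.length θ = n := by
  obtain ⟨ω, hω, rfl⟩ := cs.exists_isReduced w
  rw [hω.eq] at hn
  exact ⟨cs.wordProd (ω.take n), by rw [(hω.take n).eq, List.length_take, min_eq_left hn]⟩

variable {cs}

theorem bruhatLE_iff (hodd : ∀ t, Odd (cs.length t) → cs.IsReflection t) {u v : W} :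
    cs.bruhatLE u v ↔ u = v ∨ cs.length u < cs.length v := by
  have step {u v : W} (h : cs.length u < cs.length v) (hpar : Odd (cs.length u + cs.length v)) :
      cs.bruhatLE u v := by
    refine .single ⟨⟨v * u⁻¹, hodd _ ?_, by group⟩, h⟩
    have := cs.length_mul_mod_two v u⁻¹
    rw [cs.length_inv] at this
    rw [Nat.odd_iff] at hpar ⊢
    omega
  constructor
  · intro h
    induction h with
    | refl => exact .inl rfl
    | tail _ hstep ih => exact .inr (ih.elim (· ▸ hstep.2) (·.trans hstep.2))
  · rintro (rfl | h)
    · exact .refl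
    rcases Nat.even_or_odd (cs.length u + cs.length v) with hpar | hpar
    · rw [Nat.even_iff] at hpar
      obtain ⟨θ, hθ⟩ := cs.exists_length_eq (w := v) (n := cs.length u + 1) h
      exact (step (v := θ) (by omega) (Nat.odd_iff.2 (by omega))).trans
        (step (by omega) (Nat.odd_iff.2 (by omega)))
    · exact step h hpar

theorem bruhatLT_iff (hodd : ∀ t, Odd (cs.length t) → cs.IsReflection t) {u v : W} :
    cs.bruhatLT u v ↔ cs.length u < cs.length v := by
  rw [bruhatLT, bruhatLE_iff hodd]
  constructor
  · rintro ⟨rfl | h, hne⟩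
    exacts [absurd rfl hne, h]
  · intro h
    exact ⟨.inr h, by rintro rfl; exact lt_irrefl _ h⟩

theorem bruhatCovBy_iff (hodd : ∀ t, Odd (cs.length t) → cs.IsReflection t) {u v : W} :
    cs.bruhatCovBy u v ↔ cs.length v = cs.length u + 1 := by
  simp only [bruhatCovBy, bruhatLT_iff hodd, not_exists, not_and]
  constructor
  · rintro ⟨h, hcov⟩
    by_contra hne
    obtain ⟨θ, hθ⟩ := cs.exists_length_eq (w := v) (n := cs.length u + 1) h
    exact hcov θ (by omega) (by omega)
  · intro h
    exact ⟨by omega, fun θ h₁ h₂ => by omega⟩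

theorem bruhatHasse_adj_iff (hodd : ∀ t, Odd (cs.length t) → cs.IsReflection t)
    {u v : W} :
    cs.bruhatHasse.Adj u v ↔ cs.length v = cs.length u + 1 ∨ cs.length u = cs.length v + 1 := by
  rw [bruhatHasse, SimpleGraph.fromRel_adj, bruhatCovBy_iff hodd, bruhatCovBy_iff hodd]
  constructor
  · exact And.right
  · rintro h
    refine ⟨?_, h⟩
    rintro rfl
    omega

end CoxeterSystem

namespace DihedralGroup

/-- Reduced words for the generators `s = sr 0`, `t = sr 1`; those of the reflections `sr k`
are palindromes. -/
def coxeterWord : DihedralGroup 4 → List (Fin 2)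
  | r i => ![[], [0, 1], [0, 1, 0, 1], [1, 0]] i
  | sr i => ![[0], [1], [1, 0, 1], [0, 1, 0]] i

def coxeterLength (d : DihedralGroup 4) : ℕ := (coxeterWord d).length

def coxeterGen : Fin 2 → DihedralGroup 4 := ![sr 0, sr 1]

theorem coxeterWord_map_prod (d : DihedralGroup 4) :
    ((coxeterWord d).map coxeterGen).prod = d := by
  revert d; decide

theorem coxeterLength_gen_mul_le (i : Fin 2) (d : DihedralGroup 4) :
    coxeterLength (coxeterGen i * d) ≤ coxeterLength d + 1 := by
  revert i d; decide

theorem isLiftable_coxeterGen : (CoxeterMatrix.I 2).IsLiftable coxeterGen := by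
  unfold CoxeterMatrix.IsLiftable; decide

def bruhatGraph : SimpleGraph (DihedralGroup 4) :=
  SimpleGraph.fromRel fun x y => coxeterLength y = coxeterLength x + 1

instance : DecidableRel bruhatGraph.Adj := fun x y =>
  decidable_of_iff _ (SimpleGraph.fromRel_adj _ x y).symm

theorem neighborFinset_r0 : bruhatGraph.neighborFinset (r 0) = {sr 0, sr 1} := by decide
theorem neighborFinset_r1 : bruhatGraph.neighborFinset (r 1) = {sr 0, sr 1, sr 2, sr 3} := by decide
theorem neighborFinset_r3 : bruhatGraph.neighborFinset (r 3) = {sr 0, sr 1, sr 2, sr 3} := by decide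
theorem neighborFinset_sr0 : bruhatGraph.neighborFinset (sr 0) = {r 0, r 1, r 3} := by decide
theorem neighborFinset_sr1 : bruhatGraph.neighborFinset (sr 1) = {r 0, r 1, r 3} := by decide
theorem neighborFinset_sr2 : bruhatGraph.neighborFinset (sr 2) = {r 1, r 3, r 2} := by decide
theorem neighborFinset_sr3 : bruhatGraph.neighborFinset (sr 3) = {r 1, r 3, r 2} := by decide

/-- Multiplication by the longest element `r 2` turns length `k` into `4 - k`. -/
def bruhatGraphMulLongest : bruhatGraph ≃g bruhatGraph where
  toEquiv := Equiv.mulRight (r 2)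
  map_rel_iff' := by decide

def bruhatGraphSwapSimple : bruhatGraph ≃g bruhatGraph where
  toEquiv := Equiv.swap (sr 0) (sr 1)
  map_rel_iff' := by decide

/- The `nlinarith` hints below are the squares of an LDL decomposition of the quadratic form
`f ↦ Γ₂ f x - Γ f x / 2`. -/

theorem bakryEmeryAt_bruhatGraph_one : BakryEmeryAt bruhatGraph (1 / 2) (r 0) := fun f => by
  simp +decide only [graphGamma2, graphLap_eq_sum, graphGamma_eq_sum, neighborFinset_r0,
    neighborFinset_sr0, neighborFinset_sr1, Finset.sum_insert, Finset.mem_insert,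
    Finset.mem_singleton, Finset.sum_singleton, not_false_eq_true]
  nlinarith [sq_nonneg (4 * f (r 0) + f (r 1) + f (r 3) - 3 * f (sr 0) - 3 * f (sr 1)),
    sq_nonneg (3 * f (r 1) - f (r 3) - f (sr 0) - f (sr 1)),
    sq_nonneg (2 * f (r 3) - f (sr 0) - f (sr 1)), sq_nonneg (f (sr 0) - f (sr 1))]

theorem bakryEmeryAt_bruhatGraph_simple : BakryEmeryAt bruhatGraph (1 / 2) (sr 0) := fun f => by
  simp +decide only [graphGamma2, graphLap_eq_sum, graphGamma_eq_sum, neighborFinset_sr0,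
    neighborFinset_r0, neighborFinset_r1, neighborFinset_r3, Finset.sum_insert, Finset.mem_insert,
    Finset.mem_singleton, Finset.sum_singleton, not_false_eq_true]
  nlinarith [sq_nonneg (2 * f (r 0) + f (r 1) + f (r 3) - 3 * f (sr 0) - f (sr 1)),
    sq_nonneg (9 * f (r 1) + f (r 3) - 5 * f (sr 0) - f (sr 1) - 2 * f (sr 2) - 2 * f (sr 3)),
    sq_nonneg (10 * f (r 3) - 5 * f (sr 0) - f (sr 1) - 2 * f (sr 2) - 2 * f (sr 3)),
    sq_nonneg (f (sr 0) - f (sr 1)), sq_nonneg (2 * f (sr 1) - f (sr 2) - f (sr 3)),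
    sq_nonneg (f (sr 2) - f (sr 3))]

theorem bakryEmeryAt_bruhatGraph_rotation : BakryEmeryAt bruhatGraph (1 / 2) (r 1) := fun f => by
  simp +decide only [graphGamma2, graphLap_eq_sum, graphGamma_eq_sum, neighborFinset_r1,
    neighborFinset_sr0, neighborFinset_sr1, neighborFinset_sr2, neighborFinset_sr3,
    Finset.sum_insert, Finset.mem_insert, Finset.mem_singleton, Finset.sum_singleton,
    not_false_eq_true]
  nlinarith [sq_nonneg (f (r 0) + f (r 1) - f (sr 0) - f (sr 1)),
    sq_nonneg (2 * f (r 1) + 2 * f (r 3) - f (sr 0) - f (sr 1) - f (sr 2) - f (sr 3)),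
    sq_nonneg (f (r 2) + f (r 1) - f (sr 2) - f (sr 3)),
    sq_nonneg (4 * f (r 1) - f (sr 0) - f (sr 1) - f (sr 2) - f (sr 3)),
    sq_nonneg (f (sr 0) - f (sr 1)), sq_nonneg (f (sr 2) - f (sr 3))]

theorem coxeterLength_values :
    coxeterLength (r 0) = 0 ∧ coxeterLength (r 1) = 2 ∧ coxeterLength (r 2) = 4 ∧
      coxeterLength (r 3) = 2 ∧ coxeterLength (sr 0) = 1 ∧ coxeterLength (sr 1) = 1 ∧
      coxeterLength (sr 2) = 3 ∧ coxeterLength (sr 3) = 3 := by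
  decide

theorem graphGamma_coxeterLength :
    graphGamma bruhatGraph (fun d => (coxeterLength d : ℝ)) (fun d => (coxeterLength d : ℝ))
      (r 1) = 2 := by
  simp +decide only [graphGamma_eq_sum, neighborFinset_r1, Finset.sum_insert, Finset.mem_insert,
    Finset.mem_singleton, Finset.sum_singleton, not_false_eq_true]
  simp only [coxeterLength_values]
  norm_num

theorem graphGamma2_coxeterLength :
    graphGamma2 bruhatGraph (fun d => (coxeterLength d : ℝ)) (r 1) = 1 := by
  simp +decide only [graphGamma2, graphLap_eq_sum, graphGamma_eq_sum, neighborFinset_r1,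
    neighborFinset_sr0, neighborFinset_sr1, neighborFinset_sr2, neighborFinset_sr3,
    Finset.sum_insert, Finset.mem_insert, Finset.mem_singleton, Finset.sum_singleton,
    not_false_eq_true]
  simp only [coxeterLength_values]
  norm_num

theorem bakryEmeryAt_bruhatGraph (x : DihedralGroup 4) :
    BakryEmeryAt bruhatGraph (1 / 2) x := by
  have reverse {y} := (bakryEmeryAt_iso_iff bruhatGraphMulLongest (K := 1 / 2) (x := y)).2
  have swap {y} := (bakryEmeryAt_iso_iff bruhatGraphSwapSimple (K := 1 / 2) (x := y)).2
  rcases x with k | k <;> fin_cases k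
  exacts [bakryEmeryAt_bruhatGraph_one, bakryEmeryAt_bruhatGraph_rotation,
    reverse bakryEmeryAt_bruhatGraph_one, reverse bakryEmeryAt_bruhatGraph_rotation,
    bakryEmeryAt_bruhatGraph_simple, swap bakryEmeryAt_bruhatGraph_simple,
    reverse bakryEmeryAt_bruhatGraph_simple, reverse (swap bakryEmeryAt_bruhatGraph_simple)]

theorem graphRic_bruhatGraph : graphRic bruhatGraph = (1 / 2 : ℝ) :=
  graphRic_eq_of_forall_bakryEmeryAt_of_eq bakryEmeryAt_bruhatGraph _ (r 1)
    (by rw [graphGamma_coxeterLength]; norm_num)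
    (by rw [graphGamma_coxeterLength, graphGamma2_coxeterLength]; norm_num)

end DihedralGroup

open DihedralGroup

namespace CoxeterSystem

variable {W : Type*} [Group W] (cs : CoxeterSystem (CoxeterMatrix.I 2) W)

def toDihedral : W →* DihedralGroup 4 := cs.lift ⟨coxeterGen, isLiftable_coxeterGen⟩

def ofDihedral (d : DihedralGroup 4) : W := cs.wordProd (coxeterWord d)

theorem toDihedral_wordProd (ω : List (Fin 2)) :
    cs.toDihedral (cs.wordProd ω) = (ω.map coxeterGen).prod := by
  simp [wordProd, map_list_prod, toDihedral, List.map_map, Function.comp_def]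

theorem toDihedral_ofDihedral (d : DihedralGroup 4) : cs.toDihedral (cs.ofDihedral d) = d := by
  rw [ofDihedral, toDihedral_wordProd, coxeterWord_map_prod]

theorem simple_mul_ofDihedral (i : Fin 2) (d : DihedralGroup 4) :
    cs.simple i * cs.ofDihedral d = cs.ofDihedral (coxeterGen i * d) := by
  have braid : cs.wordProd [0, 1, 0, 1] = cs.wordProd [1, 0, 1, 0] :=
    cs.wordProd_braidWord_eq 0 1
  have cancel (i : Fin 2) (ω : List (Fin 2)) : cs.wordProd (i :: i :: ω) = cs.wordProd ω := by
    rw [wordProd_cons, wordProd_cons, simple_mul_simple_cancel_left]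
  rw [ofDihedral, ofDihedral, ← wordProd_cons]
  rcases d with k | k <;> fin_cases i <;> fin_cases k
  all_goals first
    | rfl
    | exact cancel _ _
    | exact braid.symm
    | exact (congrArg (cs.simple 1 * ·) braid).trans (cancel 1 [0, 1, 0])

theorem ofDihedral_surjective : Function.Surjective cs.ofDihedral := by
  intro w
  induction w using cs.simple_induction_left with
  | one => exact ⟨r 0, rfl⟩
  | mul_simple_left w i ih =>
    obtain ⟨d, rfl⟩ := ih
    exact ⟨coxeterGen i * d, (cs.simple_mul_ofDihedral i d).symm⟩

def mulEquivDihedral : W ≃* DihedralGroup 4 where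
  __ := cs.toDihedral
  invFun := cs.ofDihedral
  left_inv w := by
    obtain ⟨d, rfl⟩ := cs.ofDihedral_surjective w
    exact congrArg cs.ofDihedral (cs.toDihedral_ofDihedral d)
  right_inv := cs.toDihedral_ofDihedral

theorem coxeterLength_toDihedral_le (w : W) :
    coxeterLength (cs.toDihedral w) ≤ cs.length w := by
  obtain ⟨ω, hω, rfl⟩ := cs.exists_isReduced w
  rw [hω.eq]
  clear hω
  induction ω with
  | nil => rw [wordProd_nil, map_one]; rfl
  | cons i ω ih =>
    rw [wordProd_cons, map_mul, List.length_cons, toDihedral, lift_apply_simple]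
    exact (coxeterLength_gen_mul_le i _).trans (Nat.add_le_add_right ih 1)

theorem length_ofDihedral (d : DihedralGroup 4) :
    cs.length (cs.ofDihedral d) = coxeterLength d := by
  refine le_antisymm (cs.length_wordProd_le _) ?_
  simpa [toDihedral_ofDihedral] using cs.coxeterLength_toDihedral_le (cs.ofDihedral d)

theorem length_eq_coxeterLength_mulEquivDihedral (w : W) :
    cs.length w = coxeterLength (cs.mulEquivDihedral w) := by
  obtain ⟨d, rfl⟩ := cs.ofDihedral_surjective w
  exact (cs.length_ofDihedral d).trans (congrArg _ (cs.toDihedral_ofDihedral d).symm)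

theorem isReflection_of_odd_length {t : W} (ht : Odd (cs.length t)) :
    cs.IsReflection t := by
  obtain ⟨d, rfl⟩ := cs.ofDihedral_surjective t
  rw [length_ofDihedral] at ht
  rcases d with k | k <;> fin_cases k
  all_goals first
    | exact absurd ht (by decide)
    | exact cs.isReflection_wordProd_append_reverse [] _
    | exact cs.isReflection_wordProd_append_reverse [0] _
    | exact cs.isReflection_wordProd_append_reverse [1] _

def bruhatHasseIsoDihedral : cs.bruhatHasse ≃g DihedralGroup.bruhatGraph where
  toEquiv := cs.mulEquivDihedral.toEquiv
  map_rel_iff' {u v} := by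
    rw [bruhatHasse_adj_iff fun _ => cs.isReflection_of_odd_length,
      length_eq_coxeterLength_mulEquivDihedral, length_eq_coxeterLength_mulEquivDihedral,
      bruhatGraph, SimpleGraph.fromRel_adj]
    refine ⟨And.right, fun h => ⟨fun heq => ?_, h⟩⟩
    simp only [MulEquiv.toEquiv_eq_coe, EquivLike.coe_coe] at heq h
    rw [heq] at h
    omega

end CoxeterSystem

/-- The discrete Ricci curvature of the Hasse diagram of the strong Bruhat order of the
dihedral Coxeter group `I₂(4)` equals `((1 / 2 : ℝ))`. -/
theorem ric_hasse_I2_4 :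
    graphRic (CoxeterMatrix.I 2).toCoxeterSystem.bruhatHasse
      = ((((1 / 2 : ℝ)) : ℝ) : EReal) := by
  rw [graphRic_iso (CoxeterMatrix.I 2).toCoxeterSystem.bruhatHasseIsoDihedral,
    DihedralGroup.graphRic_bruhatGraph]
end

section
/- For every integer n > 5, the discrete Ricci curvature of the Hasse diagram of the strong Bruhat order of the dihedral Coxeter group I_2(n) equals 0, i.e. Ric(H(I_2(n))) = 0. -/
/-!
In `I₂(m + 2)` every element is the product of an alternating word in the two generators whose
length is the Coxeter length of the element; alternating products of length at most `m + 2` are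
told apart by their images in the dihedral group of order `2(m + 2)`. So the elements of length
`k` are the two alternating products of length `k` (a single element for `k = 0` and
`k = m + 2`), every element of odd length is a reflection, and `u < v` in the Bruhat order
exactly when `ℓ u < ℓ v`. Hence `u` and `v` are adjacent in the Hasse diagram iff their lengths
differ by one.

`Γ₂(f)(x)` only involves the values of `f` on the levels `ℓ x - 2, …, ℓ x + 2`. Up to reversing
the order, these levels come in four shapes, and for each shape `Γ₂(f)(x)` is a nonnegative
quadratic form in those values, by an explicit sum of squares; thus `Ric ≥ 0`. If `m + 2 ≥ 6`,
the length function `f = ℓ` has `Γ₂(f)(x) = 0` and `Γ(f)(x) = 2` at an element `x` of length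
`3`, so `Ric ≤ 0`.
-/

theorem graphRic_eq_of_forall_le_of_eq {V : Type*} {G : SimpleGraph V} {K : ℝ}
    (hK : ∀ f x, K * graphGamma G f f x ≤ graphGamma2 G f x) {f₀ : V → ℝ} {x₀ : V}
    (hpos : 0 < graphGamma G f₀ f₀ x₀) (heq : graphGamma2 G f₀ x₀ = K * graphGamma G f₀ f₀ x₀) :
    graphRic G = K := by
  refine le_antisymm (sSup_le ?_) (le_sSup ⟨K, hK, rfl⟩)
  rintro _ ⟨K', hK', rfl⟩
  exact EReal.coe_le_coe_iff.2 (le_of_mul_le_mul_right (heq ▸ hK' f₀ x₀) hpos)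

namespace SimpleGraph

variable {V : Type*} {G : SimpleGraph V}

/-- Lets the local computations of `Γ` and `Γ₂` below do without distinctness hypotheses on the
vertices involved. -/
def HasNeighborList (G : SimpleGraph V) (x : V) (l : List V) : Prop :=
  ∀ g : V → ℝ, ∑ᶠ v ∈ G.neighborSet x, g v = (l.map g).sum

namespace HasNeighborList

variable {x : V} {l : List V}

theorem perm (h : G.HasNeighborList x l) {l' : List V} (hl : l.Perm l') :
    G.HasNeighborList x l' :=
  fun g ↦ (h g).trans (hl.map g).sum_eq

theorem graphLap_eq (h : G.HasNeighborList x l) (g : V → ℝ) :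
    graphLap G g x = (l.map fun v ↦ g v - g x).sum :=
  h _

theorem graphGamma_eq (h : G.HasNeighborList x l) (f g : V → ℝ) :
    graphGamma G f g x = 1 / 2 * (l.map fun v ↦ (f x - f v) * (g x - g v)).sum := by
  rw [graphGamma, h]

end HasNeighborList

/- The four local estimates describe the ball of radius two around a vertex `x` of height `0`, `1`,
`2` or at least `3` in a graded graph with one vertex at the bottom and two at every other height.
The squares are those of an `LDLᵀ` decomposition of the quadratic form `f ↦ Γ₂(f)(x)`. -/

variable (f : V → ℝ)

theorem graphGamma2_nonneg_of_rank_zero {x c d e₁ e₂ : V}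
    (hx : G.HasNeighborList x [c, d])
    (hc : G.HasNeighborList c [x, e₁, e₂]) (hd : G.HasNeighborList d [x, e₁, e₂]) :
    0 ≤ graphGamma2 G f x := by
  simp only [graphGamma2, hx.graphLap_eq, hx.graphGamma_eq, hc.graphLap_eq, hc.graphGamma_eq,
    hd.graphLap_eq, hd.graphGamma_eq, List.map_cons, List.map_nil, List.sum_cons, List.sum_nil]
  nlinarith [sq_nonneg (9 * f c + 2 * f d - 2 * f e₁ - 2 * f e₂ - 7 * f x),
    sq_nonneg (11 * f d - 2 * f e₁ - 2 * f e₂ - 7 * f x),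
    sq_nonneg (7 * f e₁ - 4 * f e₂ - 3 * f x), sq_nonneg (f e₂ - f x)]

theorem graphGamma2_nonneg_of_rank_one {x x₂ r c d e₁ e₂ : V}
    (hx : G.HasNeighborList x [r, c, d]) (hr : G.HasNeighborList r [x, x₂])
    (hc : G.HasNeighborList c [x, x₂, e₁, e₂]) (hd : G.HasNeighborList d [x, x₂, e₁, e₂]) :
    0 ≤ graphGamma2 G f x := by
  simp only [graphGamma2, hx.graphLap_eq, hx.graphGamma_eq, hr.graphLap_eq, hr.graphGamma_eq,
    hc.graphLap_eq, hc.graphGamma_eq, hd.graphLap_eq, hd.graphGamma_eq,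
    List.map_cons, List.map_nil, List.sum_cons, List.sum_nil]
  linarith [sq_nonneg (11 * f c + 2 * f d - 2 * f e₁ - 2 * f e₂ + 2 * f r - 9 * f x - 2 * f x₂),
    sq_nonneg (13 * f d - 2 * f e₁ - 2 * f e₂ + 2 * f r - 9 * f x - 2 * f x₂),
    sq_nonneg (9 * f e₁ - 4 * f e₂ + 4 * f r - 5 * f x - 4 * f x₂),
    sq_nonneg (5 * f e₂ + 4 * f r - 5 * f x - 4 * f x₂),
    sq_nonneg (17 * f r - 15 * f x - 2 * f x₂), sq_nonneg (f x - f x₂)]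

theorem graphGamma2_nonneg_of_rank_two {x x₂ r a b c d e₁ e₂ : V}
    (hx : G.HasNeighborList x [a, b, c, d])
    (ha : G.HasNeighborList a [r, x, x₂]) (hb : G.HasNeighborList b [r, x, x₂])
    (hc : G.HasNeighborList c [x, x₂, e₁, e₂]) (hd : G.HasNeighborList d [x, x₂, e₁, e₂]) :
    0 ≤ graphGamma2 G f x := by
  simp only [graphGamma2, hx.graphLap_eq, hx.graphGamma_eq, ha.graphLap_eq, ha.graphGamma_eq,
    hb.graphLap_eq, hb.graphGamma_eq, hc.graphLap_eq, hc.graphGamma_eq,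
    hd.graphLap_eq, hd.graphGamma_eq, List.map_cons, List.map_nil, List.sum_cons, List.sum_nil]
  linarith [sq_nonneg (7 * f a + 2 * f b + 2 * f c + 2 * f d - 2 * f r - 9 * f x - 2 * f x₂),
    sq_nonneg (9 * f b + 2 * f c + 2 * f d - 2 * f r - 9 * f x - 2 * f x₂),
    sq_nonneg (41 * f c + 5 * f d - 9 * f e₁ - 9 * f e₂ + 4 * f r - 27 * f x - 5 * f x₂),
    sq_nonneg (46 * f d - 9 * f e₁ - 9 * f e₂ + 4 * f r - 27 * f x - 5 * f x₂),
    sq_nonneg (14 * f e₁ - 9 * f e₂ + 4 * f r - 4 * f x - 5 * f x₂),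
    sq_nonneg (5 * f e₂ + 4 * f r - 4 * f x - 5 * f x₂),
    sq_nonneg (f r - f x), sq_nonneg (f x - f x₂)]

theorem graphGamma2_nonneg_of_middle {x x₂ a b c d p₁ p₂ q₁ q₂ : V}
    (hx : G.HasNeighborList x [a, b, c, d])
    (ha : G.HasNeighborList a [p₁, p₂, x, x₂]) (hb : G.HasNeighborList b [p₁, p₂, x, x₂])
    (hc : G.HasNeighborList c [x, x₂, q₁, q₂]) (hd : G.HasNeighborList d [x, x₂, q₁, q₂]) :
    0 ≤ graphGamma2 G f x := by
  simp only [graphGamma2, hx.graphLap_eq, hx.graphGamma_eq, ha.graphLap_eq, ha.graphGamma_eq,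
    hb.graphLap_eq, hb.graphGamma_eq, hc.graphLap_eq, hc.graphGamma_eq,
    hd.graphLap_eq, hd.graphGamma_eq, List.map_cons, List.map_nil, List.sum_cons, List.sum_nil]
  linarith [sq_nonneg (5 * f a + f b + f c + f d - f p₁ - f p₂ - 5 * f x - f x₂),
    sq_nonneg (6 * f b + f c + f d - f p₁ - f p₂ - 5 * f x - f x₂),
    sq_nonneg (14 * f c + 2 * f d + f p₁ + f p₂ - 3 * f q₁ - 3 * f q₂ - 10 * f x - 2 * f x₂),
    sq_nonneg (16 * f d + f p₁ + f p₂ - 3 * f q₁ - 3 * f q₂ - 10 * f x - 2 * f x₂),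
    sq_nonneg (5 * f p₁ - 3 * f p₂ + f q₁ + f q₂ - 2 * f x - 2 * f x₂),
    sq_nonneg (2 * f p₂ + f q₁ + f q₂ - 2 * f x - 2 * f x₂),
    sq_nonneg (f q₁ - f q₂), sq_nonneg (f x - f x₂)]

theorem graphGamma2_eq_zero_of_middle {x x₂ a b c d p₁ p₂ q₁ q₂ : V}
    (hx : G.HasNeighborList x [a, b, c, d])
    (ha : G.HasNeighborList a [p₁, p₂, x, x₂]) (hb : G.HasNeighborList b [p₁, p₂, x, x₂])
    (hc : G.HasNeighborList c [x, x₂, q₁, q₂]) (hd : G.HasNeighborList d [x, x₂, q₁, q₂])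
    (hfx₂ : f x₂ = f x) (hfa : f a = f x - 1) (hfb : f b = f x - 1) (hfc : f c = f x + 1)
    (hfd : f d = f x + 1) (hfp₁ : f p₁ = f x - 2) (hfp₂ : f p₂ = f x - 2)
    (hfq₁ : f q₁ = f x + 2) (hfq₂ : f q₂ = f x + 2) :
    graphGamma2 G f x = 0 ∧ graphGamma G f f x = 2 := by
  simp only [graphGamma2, hx.graphLap_eq, hx.graphGamma_eq, ha.graphLap_eq, ha.graphGamma_eq,
    hb.graphLap_eq, hb.graphGamma_eq, hc.graphLap_eq, hc.graphGamma_eq,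
    hd.graphLap_eq, hd.graphGamma_eq, List.map_cons, List.map_nil, List.sum_cons, List.sum_nil,
    hfx₂, hfa, hfb, hfc, hfd, hfp₁, hfp₂, hfq₁, hfq₂]
  constructor <;> ring

end SimpleGraph

theorem CoxeterSystem.eq_or_length_lt_of_bruhatLE {B W : Type*} [Group W] {M : CoxeterMatrix B}
    {cs : CoxeterSystem M W} {u v : W} (h : cs.bruhatLE u v) :
    u = v ∨ cs.length u < cs.length v := by
  induction h with
  | refl => exact .inl rfl
  | tail _ hstep ih => exact .inr (ih.elim (· ▸ hstep.2) (·.trans hstep.2))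

theorem CoxeterMatrix.I_apply_of_ne {m : ℕ} {i i' : Fin 2} (h : i ≠ i') :
    CoxeterMatrix.I m i i' = m + 2 := by
  simp [CoxeterMatrix.I, h]

theorem Fin.eq_of_ne_of_ne_two {a b c : Fin 2} (hab : a ≠ b) (hcb : c ≠ b) : a = c := by
  fin_cases a <;> fin_cases b <;> fin_cases c <;> simp_all

open CoxeterSystem SimpleGraph

namespace DihedralCoxeter

noncomputable abbrev cs (m : ℕ) : CoxeterSystem (CoxeterMatrix.I m) (CoxeterMatrix.I m).Group :=
  (CoxeterMatrix.I m).toCoxeterSystem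

noncomputable def altProd (m : ℕ) (i i' : Fin 2) (k : ℕ) : (CoxeterMatrix.I m).Group :=
  (cs m).wordProd (alternatingWord i i' k)

variable {m : ℕ} {i i' : Fin 2}

@[simp] theorem altProd_zero : altProd m i i' 0 = 1 := rfl

theorem altProd_succ (k : ℕ) : altProd m i i' (k + 1) = altProd m i' i k * (cs m).simple i' := by
  rw [altProd, alternatingWord_succ, wordProd_concat, altProd]

theorem length_altProd_le (k : ℕ) : (cs m).length (altProd m i i' k) ≤ k :=
  ((cs m).length_wordProd_le _).trans_eq (length_alternatingWord i i' k)

theorem length_altProd_mod_two (k : ℕ) : (cs m).length (altProd m i i' k) % 2 = k % 2 := by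
  induction k generalizing i i' with
  | zero => simp
  | succ k ih =>
    have := ih (i := i') (i' := i)
    rw [altProd_succ, length_mul_mod_two, length_simple]
    omega

theorem exists_eq_altProd (w : (CoxeterMatrix.I m).Group) :
    ∃ i i' : Fin 2, i ≠ i' ∧ w = altProd m i i' ((cs m).length w) := by
  induction hk : (cs m).length w generalizing w with
  | zero => exact ⟨0, 1, by decide, (cs m).length_eq_zero_iff.1 hk⟩
  | succ k ih =>
    obtain ⟨i₀, hi₀⟩ := (cs m).exists_rightDescent_of_ne_one (w := w)
      (fun h ↦ by simp [h] at hk)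
    rw [isRightDescent_iff] at hi₀
    obtain ⟨j, j', hj, hw⟩ := ih (w * (cs m).simple i₀) (by omega)
    have hw' : w = altProd m j j' k * (cs m).simple i₀ := by
      rw [← hw, mul_assoc, simple_mul_simple_self, mul_one]
    by_cases h : i₀ = j
    · exact ⟨j', j, hj.symm, by rw [hw', altProd_succ, h]⟩
    -- otherwise `s i₀` cancels the last letter of the word, and `w` is too short unless `k = 0`
    obtain rfl : i₀ = j' := Fin.eq_of_ne_of_ne_two h hj.symm
    cases k with
    | zero => exact ⟨j, i₀, hj, by rw [hw', altProd_succ, altProd_zero, altProd_zero]⟩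
    | succ k =>
      have hshort : w = altProd m i₀ j k := by
        rw [hw', altProd_succ, mul_assoc, simple_mul_simple_self, mul_one]
      have := length_altProd_le (m := m) (i := i₀) (i' := j) k
      rw [← hshort] at this
      omega

theorem length_le (w : (CoxeterMatrix.I m).Group) : (cs m).length w ≤ m + 2 := by
  obtain ⟨i, i', hi, hw⟩ := exists_eq_altProd w
  by_contra! hlt
  refine (cs m).not_isReduced_alternatingWord i i' (by simp [CoxeterMatrix.I_apply_of_ne hi])
    (by rwa [CoxeterMatrix.I_apply_of_ne hi]) ?_
  rw [CoxeterSystem.IsReduced, length_alternatingWord, ← altProd, ← hw]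

theorem altProd_top (hi : i ≠ i') : altProd m i i' (m + 2) = altProd m i' i (m + 2) := by
  have := (cs m).wordProd_braidWord_eq i i'
  rwa [braidWord, braidWord, CoxeterMatrix.I_apply_of_ne hi, CoxeterMatrix.I_apply_of_ne hi.symm]
    at this

theorem isLiftable_sr :
    (CoxeterMatrix.I m).IsLiftable fun i : Fin 2 ↦ DihedralGroup.sr ((i : ℕ) : ZMod (m + 2)) := by
  intro i i'
  by_cases h : i = i'
  · simp [h, DihedralGroup.sr_mul_sr]
  · simp [CoxeterMatrix.I_apply_of_ne h, DihedralGroup.sr_mul_sr, DihedralGroup.r_pow]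

noncomputable def toDihedral (m : ℕ) : (CoxeterMatrix.I m).Group →* DihedralGroup (m + 2) :=
  (cs m).lift ⟨_, isLiftable_sr⟩

theorem toDihedral_simple (i : Fin 2) :
    toDihedral m ((cs m).simple i) = DihedralGroup.sr ((i : ℕ) : ZMod (m + 2)) :=
  (cs m).lift_apply_simple isLiftable_sr i

def altIndex (i : Fin 2) (k : ℕ) : ℤ := if i = 0 then ((k : ℤ) + 1) / 2 else -((k : ℤ) / 2)

theorem altIndex_succ (hi : i ≠ i') (k : ℕ) :
    altIndex i (k + 1) = ((i' : ℕ) : ℤ) - altIndex i' k := by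
  fin_cases i <;> fin_cases i' <;> simp_all [altIndex]; omega

theorem toDihedral_altProd (hi : i ≠ i') (k : ℕ) :
    toDihedral m (altProd m i i' k) =
      if Even k then DihedralGroup.r (altIndex i k : ZMod (m + 2))
      else DihedralGroup.sr (altIndex i k : ZMod (m + 2)) := by
  induction k generalizing i i' with
  | zero => fin_cases i <;> simp [altIndex]
  | succ k ih =>
    rw [altProd_succ, map_mul, ih hi.symm, toDihedral_simple, altIndex_succ hi]
    by_cases hk : Even k <;>
      simp [hk, Nat.even_add_one, DihedralGroup.r_mul_sr, DihedralGroup.sr_mul_sr]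

theorem altIndex_eq_of_altProd_eq {j j' : Fin 2} {k l : ℕ} (hi : i ≠ i') (hj : j ≠ j')
    (h : altProd m i i' k = altProd m j j' l) (hkl : k % 2 = l % 2)
    (hlt : |altIndex i k - altIndex j l| < m + 2) : altIndex i k = altIndex j l := by
  have h' := congrArg (toDihedral m) h
  rw [toDihedral_altProd hi, toDihedral_altProd hj] at h'
  have hcast : (altIndex i k : ZMod (m + 2)) = altIndex j l := by
    by_cases hk : Even k
    · have hl : Even l := by rw [Nat.even_iff] at *; omega
      simpa [hk, hl] using h'
    · have hl : ¬Even l := by rw [Nat.even_iff] at *; omega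
      simpa [hk, hl] using h'
  rw [ZMod.intCast_eq_intCast_iff_dvd_sub] at hcast
  have := Int.eq_zero_of_abs_lt_dvd hcast (by rwa [abs_sub_comm])
  omega

theorem length_altProd (hi : i ≠ i') {k : ℕ} (hk : k ≤ m + 2 := by omega) :
    (cs m).length (altProd m i i' k) = k := by
  by_contra hne
  have hlt := (length_altProd_le k).lt_of_ne hne
  obtain ⟨j, j', hj, hw⟩ := exists_eq_altProd (altProd m i i' k)
  have hpar := length_altProd_mod_two (m := m) (i := i) (i' := i') k
  generalize (cs m).length (altProd m i i' k) = l at hw hlt hpar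
  have := altIndex_eq_of_altProd_eq hi hj hw hpar.symm
  fin_cases i <;> fin_cases j <;> simp [altIndex, abs_lt] at this <;> omega

theorem altProd_ne_altProd_swap (hi : i ≠ i') {k : ℕ} (hk₀ : 0 < k) (hk : k < m + 2) :
    altProd m i i' k ≠ altProd m i' i k := fun h ↦ by
  have := altIndex_eq_of_altProd_eq hi hi.symm h rfl
  fin_cases i <;> fin_cases i' <;> simp [altIndex, abs_lt] at this hi <;> omega

theorem setOf_length_eq (hi : i ≠ i') {k : ℕ} (hk : k ≤ m + 2) :
    {w | (cs m).length w = k} = {altProd m i i' k, altProd m i' i k} := by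
  ext w
  constructor
  · intro hw
    obtain ⟨j, j', hj, hw'⟩ := exists_eq_altProd w
    rw [show (cs m).length w = k from hw] at hw'
    rcases eq_or_ne j i with rfl | hji
    · exact .inl (by rwa [Fin.eq_of_ne_of_ne_two hj.symm hi.symm] at hw')
    · obtain rfl := Fin.eq_of_ne_of_ne_two hji hi.symm
      exact .inr (by rwa [Fin.eq_of_ne_of_ne_two hj.symm hi] at hw')
  · rintro (rfl | rfl)
    exacts [length_altProd hi hk, length_altProd hi.symm hk]

theorem isReflection_altProd (t : ℕ) (i i' : Fin 2) :
    (cs m).IsReflection (altProd m i i' (2 * t + 1)) := by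
  induction t generalizing i i' with
  | zero => exact (cs m).isReflection_simple i'
  | succ t ih =>
    convert (ih i' i).conj ((cs m).simple i') using 1
    rw [inv_simple, mul_assoc, ← altProd_succ, altProd, altProd, ← wordProd_cons,
      show 2 * (t + 1) + 1 = 2 * t + 1 + 1 + 1 by ring, alternatingWord_succ',
      if_pos (by simp [Nat.even_add_one])]

theorem isReflection_of_odd_length {w : (CoxeterMatrix.I m).Group}
    (h : Odd ((cs m).length w)) : (cs m).IsReflection w := by
  obtain ⟨i, i', -, hw⟩ := exists_eq_altProd w
  obtain ⟨t, ht⟩ := h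
  rw [hw, ht]
  exact isReflection_altProd t i i'

theorem bruhatStep_of_length_lt {u v : (CoxeterMatrix.I m).Group}
    (hlt : (cs m).length u < (cs m).length v) (hodd : Odd ((cs m).length u + (cs m).length v)) :
    (∃ t, (cs m).IsReflection t ∧ v = t * u) ∧ (cs m).length u < (cs m).length v := by
  refine ⟨⟨v * u⁻¹, isReflection_of_odd_length ?_, by group⟩, hlt⟩
  have := (cs m).length_mul_mod_two v u⁻¹
  rw [length_inv] at this
  rw [Nat.odd_iff] at hodd ⊢
  omega

theorem bruhatLE_iff {u v : (CoxeterMatrix.I m).Group} :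
    (cs m).bruhatLE u v ↔ u = v ∨ (cs m).length u < (cs m).length v := by
  refine ⟨eq_or_length_lt_of_bruhatLE, ?_⟩
  rintro (rfl | hlt)
  · exact .refl
  by_cases hodd : Odd ((cs m).length u + (cs m).length v)
  · exact .single (bruhatStep_of_length_lt hlt hodd)
  have hv := length_le v
  set θ := altProd m 0 1 ((cs m).length u + 1)
  have hθ : (cs m).length θ = (cs m).length u + 1 := length_altProd (by decide) (by omega)
  rw [Nat.not_odd_iff_even, Nat.even_iff] at hodd
  exact .head (bruhatStep_of_length_lt (v := θ) (by omega) (by rw [hθ, Nat.odd_iff]; omega))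
    (.single (bruhatStep_of_length_lt (by omega) (by rw [hθ, Nat.odd_iff]; omega)))

theorem bruhatLT_iff {u v : (CoxeterMatrix.I m).Group} :
    (cs m).bruhatLT u v ↔ (cs m).length u < (cs m).length v := by
  rw [bruhatLT, bruhatLE_iff]
  constructor
  · rintro ⟨rfl | h, hne⟩
    exacts [absurd rfl hne, h]
  · exact fun h ↦ ⟨.inr h, by rintro rfl; exact h.false⟩

theorem bruhatCovBy_iff {u v : (CoxeterMatrix.I m).Group} :
    (cs m).bruhatCovBy u v ↔ (cs m).length v = (cs m).length u + 1 := by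
  simp only [bruhatCovBy, bruhatLT_iff, not_exists, not_and]
  refine ⟨fun ⟨hlt, hnot⟩ ↦ ?_, fun h ↦ ⟨by omega, fun θ h₁ h₂ ↦ by omega⟩⟩
  have hv := length_le v
  have hθ := hnot (altProd m 0 1 ((cs m).length u + 1))
  rw [length_altProd (by decide) (by omega)] at hθ
  omega

theorem bruhatHasse_adj_iff {u v : (CoxeterMatrix.I m).Group} :
    (cs m).bruhatHasse.Adj u v ↔
      (cs m).length v = (cs m).length u + 1 ∨ (cs m).length u = (cs m).length v + 1 := by
  rw [bruhatHasse, SimpleGraph.fromRel_adj, bruhatCovBy_iff, bruhatCovBy_iff]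
  exact ⟨And.right, fun h ↦ ⟨by rintro rfl; omega, h⟩⟩

theorem finite_setOf_length_eq (k : ℕ) : {w | (cs m).length w = k}.Finite := by
  refine (Set.toFinite {altProd m 0 1 k, altProd m 1 0 k}).subset fun w hw ↦ ?_
  obtain ⟨j, j', hj, hw'⟩ := exists_eq_altProd w
  rw [show (cs m).length w = k from hw] at hw'
  fin_cases j <;> fin_cases j' <;> simp_all

theorem neighborSet_bruhatHasse_of_length_eq_zero {y : (CoxeterMatrix.I m).Group}
    (hy : (cs m).length y = 0) :
    (cs m).bruhatHasse.neighborSet y = {v | (cs m).length v = 1} := by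
  ext v
  simp only [mem_neighborSet, bruhatHasse_adj_iff, hy, Set.mem_ofPred_eq]
  omega

theorem finsum_neighborSet_bruhatHasse {y : (CoxeterMatrix.I m).Group} {k : ℕ}
    (hy : (cs m).length y = k + 1) (g : (CoxeterMatrix.I m).Group → ℝ) :
    ∑ᶠ v ∈ (cs m).bruhatHasse.neighborSet y, g v =
      ∑ᶠ v ∈ {v | (cs m).length v = k}, g v + ∑ᶠ v ∈ {v | (cs m).length v = k + 2}, g v := by
  have hN : (cs m).bruhatHasse.neighborSet y =
      {v | (cs m).length v = k} ∪ {v | (cs m).length v = k + 2} := by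
    ext v
    simp only [mem_neighborSet, bruhatHasse_adj_iff, hy, Set.mem_union, Set.mem_ofPred_eq]
    omega
  rw [hN, finsum_mem_union _ (finite_setOf_length_eq k) (finite_setOf_length_eq (k + 2))]
  exact Set.disjoint_left.2 fun v h₁ h₂ ↦ by rw [Set.mem_ofPred_eq] at h₁ h₂; omega

theorem finsum_setOf_length_eq (hi : i ≠ i') {k : ℕ} (hk₀ : 0 < k) (hk : k < m + 2)
    (g : (CoxeterMatrix.I m).Group → ℝ) :
    ∑ᶠ w ∈ {w | (cs m).length w = k}, g w = g (altProd m i i' k) + g (altProd m i' i k) := by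
  rw [setOf_length_eq hi hk.le, finsum_mem_pair (altProd_ne_altProd_swap hi hk₀ hk)]

theorem setOf_length_eq_zero : {w : (CoxeterMatrix.I m).Group | (cs m).length w = 0} = {1} := by
  ext w
  simp [length_eq_zero_iff]

theorem setOf_length_eq_top (hi : i ≠ i') :
    {w | (cs m).length w = m + 2} = {altProd m i i' (m + 2)} := by
  rw [setOf_length_eq hi le_rfl, altProd_top hi, Set.pair_eq_singleton]

theorem setOf_length_eq_of_lt {k : ℕ} (hk : m + 2 < k) :
    {w : (CoxeterMatrix.I m).Group | (cs m).length w = k} = ∅ := by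
  ext w
  simpa using ((length_le w).trans_lt hk).ne

theorem hasNeighborList_of_length_eq_zero (hi : i ≠ i') {y : (CoxeterMatrix.I m).Group}
    (hy : (cs m).length y = 0) :
    (cs m).bruhatHasse.HasNeighborList y [altProd m i i' 1, altProd m i' i 1] := fun g ↦ by
  rw [neighborSet_bruhatHasse_of_length_eq_zero hy, finsum_setOf_length_eq hi one_pos (by omega)]
  simp

theorem hasNeighborList_of_length_eq_one (hi : i ≠ i') {y : (CoxeterMatrix.I m).Group}
    (hy : (cs m).length y = 1) (hm : 1 ≤ m := by omega) :
    (cs m).bruhatHasse.HasNeighborList y [1, altProd m i i' 2, altProd m i' i 2] := fun g ↦ by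
  rw [finsum_neighborSet_bruhatHasse (k := 0) hy, setOf_length_eq_zero, finsum_mem_singleton,
    finsum_setOf_length_eq (k := 0 + 2) hi two_pos (by omega)]
  simp

theorem hasNeighborList_of_length_eq_succ (hi : i ≠ i') {y : (CoxeterMatrix.I m).Group} {j : ℕ}
    (hy : (cs m).length y = j + 1) (hj₀ : 0 < j := by omega) (hj : j + 2 < m + 2 := by omega) :
    (cs m).bruhatHasse.HasNeighborList y
      [altProd m i i' j, altProd m i' i j, altProd m i i' (j + 2), altProd m i' i (j + 2)] :=
  fun g ↦ by
  rw [finsum_neighborSet_bruhatHasse hy, finsum_setOf_length_eq hi hj₀ (by omega),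
    finsum_setOf_length_eq hi (by omega) hj]
  simp [add_assoc]

theorem hasNeighborList_of_length_eq_succ' (hi : i ≠ i') {y : (CoxeterMatrix.I m).Group} {j : ℕ}
    (hy : (cs m).length y = j + 1) (hj₀ : 0 < j := by omega) (hj : j + 2 < m + 2 := by omega) :
    (cs m).bruhatHasse.HasNeighborList y
      [altProd m i i' (j + 2), altProd m i' i (j + 2), altProd m i i' j, altProd m i' i j] :=
  (hasNeighborList_of_length_eq_succ hi hy hj₀ hj).perm (List.perm_append_comm (l₁ := [_, _]))

theorem hasNeighborList_of_length_eq_pred_top (hi : i ≠ i') {y : (CoxeterMatrix.I m).Group}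
    (hy : (cs m).length y = m + 1) (hm : 1 ≤ m := by omega) :
    (cs m).bruhatHasse.HasNeighborList y
      [altProd m i i' (m + 2), altProd m i i' m, altProd m i' i m] := fun g ↦ by
  rw [finsum_neighborSet_bruhatHasse hy, finsum_setOf_length_eq hi (by omega) (by omega),
    setOf_length_eq_top hi, finsum_mem_singleton]
  simp only [List.map_cons, List.map_nil, List.sum_cons, List.sum_nil]
  ring

theorem hasNeighborList_of_length_eq_top (hi : i ≠ i') {y : (CoxeterMatrix.I m).Group}
    (hy : (cs m).length y = m + 2) :
    (cs m).bruhatHasse.HasNeighborList y [altProd m i i' (m + 1), altProd m i' i (m + 1)] :=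
  fun g ↦ by
  rw [finsum_neighborSet_bruhatHasse hy, finsum_setOf_length_eq hi (by omega) (by omega),
    setOf_length_eq_of_lt (by omega)]
  simp

variable (f : (CoxeterMatrix.I m).Group → ℝ)

theorem graphGamma2_altProd_nonneg_near_bottom (hm : 3 ≤ m) (hi : i ≠ i') {k : ℕ} (hk : k ≤ 2) :
    0 ≤ graphGamma2 (cs m).bruhatHasse f (altProd m i i' k) := by
  interval_cases k
  · exact graphGamma2_nonneg_of_rank_zero f
      (hasNeighborList_of_length_eq_zero hi (length_one _))
      (hasNeighborList_of_length_eq_one hi (length_altProd hi))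
      (hasNeighborList_of_length_eq_one hi (length_altProd hi.symm))
  · exact graphGamma2_nonneg_of_rank_one f
      (hasNeighborList_of_length_eq_one hi (length_altProd hi))
      (hasNeighborList_of_length_eq_zero hi (length_one _))
      (hasNeighborList_of_length_eq_succ (j := 1) hi (length_altProd hi))
      (hasNeighborList_of_length_eq_succ (j := 1) hi (length_altProd hi.symm))
  · exact graphGamma2_nonneg_of_rank_two f
      (hasNeighborList_of_length_eq_succ (j := 1) hi (length_altProd hi))
      (hasNeighborList_of_length_eq_one hi (length_altProd hi))
      (hasNeighborList_of_length_eq_one hi (length_altProd hi.symm))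
      (hasNeighborList_of_length_eq_succ (j := 2) hi (length_altProd hi))
      (hasNeighborList_of_length_eq_succ (j := 2) hi (length_altProd hi.symm))

theorem graphGamma2_altProd_nonneg_near_top (hm : 3 ≤ m) (hi : i ≠ i') {k : ℕ} (hk : m ≤ k)
    (hk' : k ≤ m + 2) : 0 ≤ graphGamma2 (cs m).bruhatHasse f (altProd m i i' k) := by
  obtain ⟨t, rfl⟩ : ∃ t, m = t + 3 := ⟨m - 3, by omega⟩
  obtain rfl | rfl | rfl : k = t + 3 ∨ k = t + 4 ∨ k = t + 5 := by omega
  · exact graphGamma2_nonneg_of_rank_two f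
      (hasNeighborList_of_length_eq_succ' (j := t + 2) hi (length_altProd hi))
      (hasNeighborList_of_length_eq_pred_top hi (length_altProd hi))
      (hasNeighborList_of_length_eq_pred_top hi (length_altProd hi.symm))
      (hasNeighborList_of_length_eq_succ' (j := t + 1) hi (length_altProd hi))
      (hasNeighborList_of_length_eq_succ' (j := t + 1) hi (length_altProd hi.symm))
  · exact graphGamma2_nonneg_of_rank_one f
      (hasNeighborList_of_length_eq_pred_top hi (length_altProd hi))
      (hasNeighborList_of_length_eq_top hi (length_altProd hi))
      (hasNeighborList_of_length_eq_succ' (j := t + 2) hi (length_altProd hi))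
      (hasNeighborList_of_length_eq_succ' (j := t + 2) hi (length_altProd hi.symm))
  · exact graphGamma2_nonneg_of_rank_zero f
      (hasNeighborList_of_length_eq_top hi (length_altProd hi))
      (hasNeighborList_of_length_eq_pred_top hi (length_altProd hi))
      (hasNeighborList_of_length_eq_pred_top hi (length_altProd hi.symm))

theorem graphGamma2_nonneg (hm : 3 ≤ m) (x : (CoxeterMatrix.I m).Group) :
    0 ≤ graphGamma2 (cs m).bruhatHasse f x := by
  obtain ⟨i, i', hi, hx⟩ := exists_eq_altProd x
  have hk := length_le x
  generalize (cs m).length x = k at hx hk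
  subst hx
  rcases le_or_gt k 2 with hk₂ | hk₂
  · exact graphGamma2_altProd_nonneg_near_bottom f hm hi hk₂
  rcases le_or_gt m k with hkm | hkm
  · exact graphGamma2_altProd_nonneg_near_top f hm hi hkm hk
  obtain ⟨j, rfl⟩ : ∃ j, k = j + 3 := ⟨k - 3, by omega⟩
  exact graphGamma2_nonneg_of_middle f
    (hasNeighborList_of_length_eq_succ (j := j + 2) hi (length_altProd hi))
    (hasNeighborList_of_length_eq_succ (j := j + 1) hi (length_altProd hi))
    (hasNeighborList_of_length_eq_succ (j := j + 1) hi (length_altProd hi.symm))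
    (hasNeighborList_of_length_eq_succ (j := j + 3) hi (length_altProd hi))
    (hasNeighborList_of_length_eq_succ (j := j + 3) hi (length_altProd hi.symm))

theorem graphGamma2_length_eq_zero (hm : 4 ≤ m) :
    graphGamma2 (cs m).bruhatHasse (fun w ↦ ((cs m).length w : ℝ)) (altProd m 0 1 3) = 0 ∧
      graphGamma (cs m).bruhatHasse (fun w ↦ ((cs m).length w : ℝ))
        (fun w ↦ ((cs m).length w : ℝ)) (altProd m 0 1 3) = 2 := by
  have h₀₁ : (0 : Fin 2) ≠ 1 := by decide
  have hlen {i i' : Fin 2} {j : ℕ} (hi : i ≠ i') (hj : j ≤ m + 2) :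
      ((cs m).length (altProd m i i' j) : ℝ) = j := by
    rw [length_altProd hi hj]
  refine graphGamma2_eq_zero_of_middle _
    (hasNeighborList_of_length_eq_succ (j := 2) h₀₁ (length_altProd h₀₁))
    (hasNeighborList_of_length_eq_succ (j := 1) h₀₁ (length_altProd h₀₁))
    (hasNeighborList_of_length_eq_succ (j := 1) h₀₁ (length_altProd h₀₁.symm))
    (hasNeighborList_of_length_eq_succ (j := 3) h₀₁ (length_altProd h₀₁))
    (hasNeighborList_of_length_eq_succ (j := 3) h₀₁ (length_altProd h₀₁.symm))
    ?_ ?_ ?_ ?_ ?_ ?_ ?_ ?_ ?_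
  all_goals simp (disch := omega) only [hlen h₀₁, hlen h₀₁.symm]
  all_goals norm_num

end DihedralCoxeter

/-- For every integer `n > 5`, the discrete Ricci curvature of the Hasse diagram of the
strong Bruhat order of the dihedral Coxeter group `I₂(n)` equals `0`. -/
theorem ric_hasse_I2_eq_zero (n : ℕ) (hn : 5 < n) :
    graphRic (CoxeterMatrix.I (n - 2)).toCoxeterSystem.bruhatHasse = ((0 : ℝ) : EReal) := by
  obtain ⟨m, rfl⟩ : ∃ m, n = m + 2 := ⟨n - 2, by omega⟩
  rw [Nat.add_sub_cancel]
  obtain ⟨hΓ₂, hΓ⟩ := DihedralCoxeter.graphGamma2_length_eq_zero (m := m) (by omega)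
  exact graphRic_eq_of_forall_le_of_eq
    (fun f x ↦ by simpa using DihedralCoxeter.graphGamma2_nonneg f (by omega) x)
    (by rw [hΓ]; norm_num) (by rw [hΓ₂, zero_mul])
end
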